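/- arXiv:2409.14503 — 2 statements merged into one kernel-verified Lean document; each statement's English description precedes it below -/
import Mathlib

section
/- Let U and V be oriented real inner product spaces of the same finite dimension n ≥ 2, and let T : U → V be an invertible linear map that is orientation-preserving (i.e. T maps positively oriented bases of U to positively oriented bases of V). Then [T]_tr = ‖T‖_tr. -/
/-! Take an orthonormal eigenbasis `e` of `T* T`, with signs flipped so that it is positively
oriented. The vectors `T eᵢ` are orthogonal, so `T eᵢ = σᵢ • fᵢ` with `σᵢ > 0` and `f` orthonormal;
as `T` preserves orientation, `f` is positively oriented too. For any orthonormal bases `b`, `c`,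
expanding in `e` and `f` gives `|⟪T bᵢ, cᵢ⟫| ≤ ∑ₖ σₖ |⟪eₖ, bᵢ⟫| |⟪fₖ, cᵢ⟫|`, and summing over `i`
with `2 |x| |y| ≤ x² + y²` and Parseval bounds `∑ᵢ |⟪T bᵢ, cᵢ⟫|` by `∑ₖ σₖ`. The positively
oriented pair `(e, f)` attains this bound with all terms positive, so both suprema equal `∑ₖ σₖ`. -/

open scoped RealInnerProductSpace

/-- The oriented trace of a linear map `T : U → V` between oriented inner product
spaces: the supremum over all positively oriented orthonormal bases `(u_i)` of `U`
and `(v_i)` of `V` of `∑ i, ⟪T u_i, v_i⟫`. -/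
noncomputable def orientedTrace {U V : Type*} [NormedAddCommGroup U] [InnerProductSpace ℝ U]
    [NormedAddCommGroup V] [InnerProductSpace ℝ V] (n : ℕ)
    (oU : Orientation ℝ U (Fin n)) (oV : Orientation ℝ V (Fin n)) (T : U →ₗ[ℝ] V) : ℝ :=
  ⨆ b : {b : OrthonormalBasis (Fin n) ℝ U // b.toBasis.orientation = oU},
  ⨆ c : {c : OrthonormalBasis (Fin n) ℝ V // c.toBasis.orientation = oV},
    ∑ i, ⟪T (b.val i), c.val i⟫

/-- The trace norm of a linear map `T : U → V`: the supremum over all orthonormal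
bases `(u_i)` of `U` and `(v_i)` of `V` of `∑ i, |⟪T u_i, v_i⟫|`. -/
noncomputable def traceNorm {U V : Type*} [NormedAddCommGroup U] [InnerProductSpace ℝ U]
    [NormedAddCommGroup V] [InnerProductSpace ℝ V] (n : ℕ) (T : U →ₗ[ℝ] V) : ℝ :=
  ⨆ b : OrthonormalBasis (Fin n) ℝ U, ⨆ c : OrthonormalBasis (Fin n) ℝ V,
    ∑ i, |⟪T (b i), c i⟫|

open Module

theorem ciSup_ciSup_eq_of_forall_le_of_eq {α β γ : Type*} [ConditionallyCompleteLattice γ]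
    {g : α → β → γ} {M : γ} (hle : ∀ a b, g a b ≤ M) (a₀ : α) (b₀ : β) (hM : g a₀ b₀ = M) :
    ⨆ a, ⨆ b, g a b = M := by
  have : Nonempty α := ⟨a₀⟩
  have : Nonempty β := ⟨b₀⟩
  have hinner (a : α) : ⨆ b, g a b ≤ M := ciSup_le (hle a)
  refine le_antisymm (ciSup_le hinner) ?_
  calc M = g a₀ b₀ := hM.symm
    _ ≤ ⨆ b, g a₀ b := le_ciSup ⟨M, Set.forall_mem_range.2 (hle a₀)⟩ b₀
    _ ≤ ⨆ a, ⨆ b, g a b := le_ciSup ⟨M, Set.forall_mem_range.2 hinner⟩ a₀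

theorem Module.Basis.orientation_eq_of_apply_eq_smul {R M ι : Type*} [Field R] [LinearOrder R]
    [IsStrictOrderedRing R] [AddCommGroup M] [Module R M] [Fintype ι] [DecidableEq ι]
    {b c : Basis ι R M} {σ : ι → R} (hσ : ∀ i, 0 < σ i) (hc : ∀ i, c i = σ i • b i) :
    c.orientation = b.orientation := by
  let w : ι → Rˣ := fun i => Units.mk0 (σ i) (hσ i).ne'
  have hcw : c = b.unitsSMul w := by
    ext i
    simp [hc i, w, Basis.unitsSMul_apply]
  rw [hcw, Basis.orientation_unitsSMul]
  exact Module.Ray.units_smul_of_pos _ (by simpa [w] using Finset.prod_pos fun i _ => hσ i) _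

section

variable {U V : Type*} [NormedAddCommGroup U] [InnerProductSpace ℝ U]
  [NormedAddCommGroup V] [InnerProductSpace ℝ V]

theorem OrthonormalBasis.sum_abs_inner_mul_abs_inner_le {ι : Type*} [Fintype ι]
    (b : OrthonormalBasis ι ℝ U) (c : OrthonormalBasis ι ℝ V) (x : U) (y : V) :
    ∑ i, |⟪x, b i⟫| * |⟪y, c i⟫| ≤ (‖x‖ ^ 2 + ‖y‖ ^ 2) / 2 := by
  rw [← b.sum_sq_inner_left, ← c.sum_sq_inner_left, ← Finset.sum_add_distrib,
    Finset.sum_div]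
  refine Finset.sum_le_sum fun i _ => ?_
  nlinarith [two_mul_le_add_sq |⟪x, b i⟫| |⟪y, c i⟫|, sq_abs ⟪x, b i⟫, sq_abs ⟪y, c i⟫]

theorem inner_apply_eq_sum_of_apply_eq_smul {ι : Type*} [Fintype ι] {T : U →ₗ[ℝ] V}
    {e : OrthonormalBasis ι ℝ U} {f : ι → V} {σ : ι → ℝ} (hT : ∀ k, T (e k) = σ k • f k)
    (x : U) (y : V) : ⟪T x, y⟫ = ∑ k, σ k * (⟪e k, x⟫ * ⟪f k, y⟫) := by
  conv_lhs => rw [← e.sum_repr' x]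
  simp only [map_sum, map_smul, hT, smul_smul, sum_inner, real_inner_smul_left]
  exact Finset.sum_congr rfl fun k _ => by ring

theorem sum_abs_inner_apply_le_of_apply_eq_smul {ι κ : Type*} [Fintype ι] [Fintype κ]
    {T : U →ₗ[ℝ] V} {e : OrthonormalBasis ι ℝ U} {f : OrthonormalBasis ι ℝ V} {σ : ι → ℝ}
    (hσ : ∀ k, 0 ≤ σ k) (hT : ∀ k, T (e k) = σ k • f k)
    (b : OrthonormalBasis κ ℝ U) (c : OrthonormalBasis κ ℝ V) :
    ∑ i, |⟪T (b i), c i⟫| ≤ ∑ k, σ k := calc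
  ∑ i, |⟪T (b i), c i⟫| ≤ ∑ i, ∑ k, σ k * (|⟪e k, b i⟫| * |⟪f k, c i⟫|) := by
      refine Finset.sum_le_sum fun i _ => ?_
      rw [inner_apply_eq_sum_of_apply_eq_smul hT]
      refine (Finset.abs_sum_le_sum_abs _ _).trans_eq ?_
      simp only [abs_mul, abs_of_nonneg (hσ _)]
  _ = ∑ k, σ k * ∑ i, |⟪e k, b i⟫| * |⟪f k, c i⟫| := by
      rw [Finset.sum_comm]
      simp only [Finset.mul_sum]
  _ ≤ ∑ k, σ k * 1 := by
      refine Finset.sum_le_sum fun k _ => mul_le_mul_of_nonneg_left ?_ (hσ k)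
      simpa using b.sum_abs_inner_mul_abs_inner_le c (e k) (f k)
  _ = ∑ k, σ k := by simp

theorem sum_inner_apply_eq_of_apply_eq_smul {ι : Type*} [Fintype ι] {T : U →ₗ[ℝ] V}
    {e : ι → U} {f : OrthonormalBasis ι ℝ V} {σ : ι → ℝ} (hT : ∀ k, T (e k) = σ k • f k) :
    ∑ k, ⟪T (e k), f k⟫ = ∑ k, σ k := by
  simp [hT, real_inner_smul_left]

theorem sum_abs_inner_apply_eq_of_apply_eq_smul {ι : Type*} [Fintype ι] {T : U →ₗ[ℝ] V}
    {e : ι → U} {f : OrthonormalBasis ι ℝ V} {σ : ι → ℝ} (hσ : ∀ k, 0 ≤ σ k)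
    (hT : ∀ k, T (e k) = σ k • f k) :
    ∑ k, |⟪T (e k), f k⟫| = ∑ k, σ k := by
  simp [hT, real_inner_smul_left, abs_of_nonneg (hσ _)]

variable [FiniteDimensional ℝ V]

theorem exists_orthonormalBasis_apply_eq_smul_of_pairwise_inner_eq_zero {n : ℕ}
    (hV : finrank ℝ V = n) {T : U →ₗ[ℝ] V} (hT : Function.Injective T)
    (e : OrthonormalBasis (Fin n) ℝ U) (horth : Pairwise fun i j => ⟪T (e i), T (e j)⟫ = 0) :
    ∃ (f : OrthonormalBasis (Fin n) ℝ V) (σ : Fin n → ℝ),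
      (∀ i, 0 < σ i) ∧ ∀ i, T (e i) = σ i • f i := by
  have hV' : finrank ℝ V = Fintype.card (Fin n) := by simp [hV]
  have hne (i : Fin n) : T (e i) ≠ 0 := (map_ne_zero_iff T hT).2 (e.orthonormal.ne_zero i)
  refine ⟨InnerProductSpace.gramSchmidtOrthonormalBasis hV' (fun i => T (e i)),
    fun i => ‖T (e i)‖, fun i => norm_pos_iff.2 (hne i), fun i => ?_⟩
  rw [InnerProductSpace.gramSchmidtOrthonormalBasis_apply_of_orthogonal hV' horth (hne i)]
  exact (smul_inv_smul₀ (norm_ne_zero_iff.2 (hne i)) _).symm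

variable [FiniteDimensional ℝ U]

theorem pairwise_inner_apply_eq_zero_of_adjoint_comp_self {ι : Type*} {T : U →ₗ[ℝ] V}
    {e : ι → U} (he : Orthonormal ℝ e) (hμ : ∀ i, ∃ μ : ℝ, (T.adjoint ∘ₗ T) (e i) = μ • e i) :
    Pairwise fun i j => ⟪T (e i), T (e j)⟫ = 0 := by
  intro i j hij
  obtain ⟨μ, hμ⟩ := hμ j
  rw [← LinearMap.adjoint_inner_right, ← LinearMap.comp_apply, hμ, real_inner_smul_right,
    he.2 hij, mul_zero]

theorem exists_orthonormalBasis_orientation_eq_apply_eq_smul {n : ℕ} [Nonempty (Fin n)]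
    (hU : finrank ℝ U = n) (hV : finrank ℝ V = n) (oU : Orientation ℝ U (Fin n))
    {T : U →ₗ[ℝ] V} (hT : Function.Injective T) :
    ∃ e : OrthonormalBasis (Fin n) ℝ U, e.toBasis.orientation = oU ∧
      ∃ (f : OrthonormalBasis (Fin n) ℝ V) (σ : Fin n → ℝ),
        (∀ i, 0 < σ i) ∧ ∀ i, T (e i) = σ i • f i := by
  have hA := T.isSymmetric_adjoint_comp_self
  let e := (hA.eigenvectorBasis hU).adjustToOrientation oU
  have heig (i : Fin n) : ∃ μ : ℝ, (T.adjoint ∘ₗ T) (e i) = μ • e i := by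
    refine ⟨hA.eigenvalues hU i, ?_⟩
    rcases (hA.eigenvectorBasis hU).adjustToOrientation_apply_eq_or_eq_neg oU i with h | h <;>
      simp [e, h, -LinearMap.coe_comp]
  exact ⟨e, (hA.eigenvectorBasis hU).orientation_adjustToOrientation oU,
    exists_orthonormalBasis_apply_eq_smul_of_pairwise_inner_eq_zero hV hT e
      (pairwise_inner_apply_eq_zero_of_adjoint_comp_self e.orthonormal heig)⟩

end

theorem orientedTrace_eq_traceNorm_of_orientationPreserving_general {U V : Type*}
    [NormedAddCommGroup U] [InnerProductSpace ℝ U]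
    [NormedAddCommGroup V] [InnerProductSpace ℝ V]
    [FiniteDimensional ℝ U] [FiniteDimensional ℝ V]
    (n : ℕ) (hU : Module.finrank ℝ U = n) (hV : Module.finrank ℝ V = n)
    (oU : Orientation ℝ U (Fin n)) (oV : Orientation ℝ V (Fin n)) (T : U →ₗ[ℝ] V)
    (hT : Function.Bijective T)
    (h : ∀ b : Module.Basis (Fin n) ℝ U, b.orientation = oU →
      (b.map (LinearEquiv.ofBijective T hT)).orientation = oV) :
    orientedTrace n oU oV T = traceNorm n T := by
  rcases isEmpty_or_nonempty (Fin n) with hn | hn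
  · simp [orientedTrace, traceNorm]
  obtain ⟨e, he, f, σ, hσ, hTe⟩ :=
    exists_orthonormalBasis_orientation_eq_apply_eq_smul hU hV oU hT.injective
  have hf : f.toBasis.orientation = oV := by
    rw [← h e.toBasis he]
    exact (Basis.orientation_eq_of_apply_eq_smul hσ (by simpa using hTe)).symm
  have hσ₀ (k : Fin n) : 0 ≤ σ k := (hσ k).le
  have hbound := sum_abs_inner_apply_le_of_apply_eq_smul (κ := Fin n) hσ₀ hTe
  have hoT : orientedTrace n oU oV T = ∑ k, σ k :=
    ciSup_ciSup_eq_of_forall_le_of_eq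
      (fun b c => (Finset.sum_le_sum fun i _ => le_abs_self _).trans (hbound b.1 c.1))
      ⟨e, he⟩ ⟨f, hf⟩ (sum_inner_apply_eq_of_apply_eq_smul hTe)
  have htN : traceNorm n T = ∑ k, σ k :=
    ciSup_ciSup_eq_of_forall_le_of_eq hbound e f
      (sum_abs_inner_apply_eq_of_apply_eq_smul hσ₀ hTe)
  rw [hoT, htN]

/-- If `T` is invertible and orientation-preserving (it maps every positively
oriented basis of `U` to a positively oriented basis of `V`), then its oriented
trace equals its trace norm. -/
theorem orientedTrace_eq_traceNorm_of_orientationPreserving {U V : Type*}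
    [NormedAddCommGroup U] [InnerProductSpace ℝ U]
    [NormedAddCommGroup V] [InnerProductSpace ℝ V]
    [FiniteDimensional ℝ U] [FiniteDimensional ℝ V]
    (n : ℕ) (hn : 2 ≤ n) (hU : Module.finrank ℝ U = n) (hV : Module.finrank ℝ V = n)
    (oU : Orientation ℝ U (Fin n)) (oV : Orientation ℝ V (Fin n)) (T : U →ₗ[ℝ] V)
    (hT : Function.Bijective T)
    (h : ∀ b : Module.Basis (Fin n) ℝ U, b.orientation = oU →
      (b.map (LinearEquiv.ofBijective T hT)).orientation = oV) :
    orientedTrace n oU oV T = traceNorm n T :=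
  orientedTrace_eq_traceNorm_of_orientationPreserving_general n hU hV oU oV T hT h
end

section
/- Let U and V be real inner product spaces of the same finite dimension n ≥ 2, let T : U → V be a linear map, and let u ∈ U and w ∈ V be unit vectors. Let P denote the orthogonal projection of V onto the orthogonal complement (span w)ᗮ, and let T′ : (span u)ᗮ → (span w)ᗮ be the linear map obtained by restricting P ∘ T to (span u)ᗮ. Then ‖T′‖_tr + |⟨T u, w⟩| ≤ ‖T‖_tr, where the trace norms are taken between the (n−1)-dimensional inner product spaces (span u)ᗮ, (span w)ᗮ and between U, V respectively. -/
open scoped RealInnerProductSpace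

/-!
Extending orthonormal bases `(b_i)` of `(ℝ ∙ u)ᗮ` and `(c_i)` of `(ℝ ∙ w)ᗮ` by `u` and `w` gives
orthonormal bases of `U` and `V`. Since the projection onto `(ℝ ∙ w)ᗮ` does not change inner
products with the `c_i`, the sum `∑ |⟪T b_i, c_i⟫| + |⟪T u, w⟫|` is one of the sums whose
supremum is `‖T‖_tr`.
-/

open scoped InnerProductSpace

section

variable {𝕜 E : Type*} [RCLike 𝕜] [NormedAddCommGroup E] [InnerProductSpace 𝕜 E] {m : ℕ}

theorem Orthonormal.snoc {v : Fin m → E} (hv : Orthonormal 𝕜 v) {x : E} (hx : ‖x‖ = 1)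
    (hvx : ∀ i, ⟪v i, x⟫_𝕜 = 0) : Orthonormal 𝕜 (Fin.snoc v x : Fin (m + 1) → E) := by
  rw [orthonormal_iff_ite]
  intro i j
  induction i using Fin.lastCases <;> induction j using Fin.lastCases <;>
    simp [inner_self_eq_norm_sq_to_K, hx, hvx, inner_eq_zero_symm.mp (hvx _),
      orthonormal_iff_ite.mp hv, Fin.castSucc_ne_last, (Fin.castSucc_ne_last _).symm]

theorem nonempty_orthonormalBasis_orthogonal_span_singleton (hE : Module.finrank 𝕜 E = m + 1)
    {x : E} (hx : x ≠ 0) : Nonempty (OrthonormalBasis (Fin m) 𝕜 (𝕜 ∙ x)ᗮ) :=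
  have : Fact (Module.finrank 𝕜 E = m + 1) := ⟨hE⟩
  have : FiniteDimensional 𝕜 E := .of_fact_finrank_eq_succ m
  ⟨(stdOrthonormalBasis 𝕜 _).reindex (finCongr (Submodule.finrank_orthogonal_span_singleton hx))⟩

namespace OrthonormalBasis

variable {x : E} (b : OrthonormalBasis (Fin m) 𝕜 (𝕜 ∙ x)ᗮ)

theorem orthonormal_snoc (hx : ‖x‖ = 1) :
    Orthonormal 𝕜 (Fin.snoc (fun i ↦ (b i : E)) x : Fin (m + 1) → E) :=
  (b.orthonormal.comp_linearIsometry (𝕜 ∙ x)ᗮ.subtypeₗᵢ).snoc hx fun i ↦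
    inner_eq_zero_symm.mp (Submodule.mem_orthogonal_singleton_iff_inner_right.mp (b i).2)

theorem orthogonal_span_range_snoc_eq_bot :
    (Submodule.span 𝕜 (Set.range (Fin.snoc (fun i ↦ (b i : E)) x : Fin (m + 1) → E)))ᗮ = ⊥ := by
  refine Submodule.eq_bot_iff _ |>.mpr fun y hy ↦ ?_
  have hy' : ∀ i, ⟪(Fin.snoc (fun i ↦ (b i : E)) x : Fin (m + 1) → E) i, y⟫_𝕜 = 0 :=
    fun i ↦ Submodule.inner_right_of_mem_orthogonal
      (Submodule.subset_span (Set.mem_range_self i)) hy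
  have hyx : y ∈ (𝕜 ∙ x)ᗮ :=
    Submodule.mem_orthogonal_singleton_iff_inner_right.mpr (by simpa using hy' (Fin.last m))
  have : (⟨y, hyx⟩ : (𝕜 ∙ x)ᗮ) = 0 :=
    InnerProductSpace.ext_inner_left_basis b.toBasis fun i ↦ by simpa using hy' i.castSucc
  simpa using congr_arg Subtype.val this

protected noncomputable def snoc (hx : ‖x‖ = 1) : OrthonormalBasis (Fin (m + 1)) 𝕜 E :=
  .mkOfOrthogonalEqBot (b.orthonormal_snoc hx) b.orthogonal_span_range_snoc_eq_bot

@[simp]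
theorem coe_snoc (hx : ‖x‖ = 1) : ⇑(b.snoc hx) = Fin.snoc (fun i ↦ (b i : E)) x :=
  OrthonormalBasis.coe_of_orthogonal_eq_bot_mk _ _

end OrthonormalBasis

end

section

variable {U V : Type*} [NormedAddCommGroup U] [InnerProductSpace ℝ U]
  [NormedAddCommGroup V] [InnerProductSpace ℝ V] {n : ℕ} {T : U →ₗ[ℝ] V}

theorem sum_abs_inner_le_mul_opNorm [FiniteDimensional ℝ U] (b : OrthonormalBasis (Fin n) ℝ U)
    (c : OrthonormalBasis (Fin n) ℝ V) :
    ∑ i, |⟪T (b i), c i⟫| ≤ n * ‖LinearMap.toContinuousLinearMap T‖ := by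
  calc ∑ i, |⟪T (b i), c i⟫|
      ≤ ∑ i, ‖LinearMap.toContinuousLinearMap T‖ * ‖b i‖ * ‖c i‖ := by
        gcongr with i
        exact (abs_real_inner_le_norm _ _).trans <| by
          gcongr; exact (LinearMap.toContinuousLinearMap T).le_opNorm _
    _ = n * ‖LinearMap.toContinuousLinearMap T‖ := by
        simp [b.orthonormal.1, c.orthonormal.1]

theorem sum_abs_inner_le_traceNorm [FiniteDimensional ℝ U] (b : OrthonormalBasis (Fin n) ℝ U)
    (c : OrthonormalBasis (Fin n) ℝ V) : ∑ i, |⟪T (b i), c i⟫| ≤ traceNorm n T := by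
  have hbdd : ∀ b : OrthonormalBasis (Fin n) ℝ U,
      BddAbove (Set.range fun c : OrthonormalBasis (Fin n) ℝ V ↦ ∑ i, |⟪T (b i), c i⟫|) :=
    fun b ↦ ⟨_, Set.forall_mem_range.mpr (sum_abs_inner_le_mul_opNorm b)⟩
  refine le_ciSup_of_le ⟨n * ‖LinearMap.toContinuousLinearMap T‖, ?_⟩ b (le_ciSup (hbdd b) c)
  exact Set.forall_mem_range.mpr fun b ↦
    Real.iSup_le (sum_abs_inner_le_mul_opNorm b) (by positivity)

theorem traceNorm_le [Nonempty (OrthonormalBasis (Fin n) ℝ U)]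
    [Nonempty (OrthonormalBasis (Fin n) ℝ V)] {a : ℝ}
    (h : ∀ b : OrthonormalBasis (Fin n) ℝ U, ∀ c : OrthonormalBasis (Fin n) ℝ V,
      ∑ i, |⟪T (b i), c i⟫| ≤ a) :
    traceNorm n T ≤ a :=
  ciSup_le fun b ↦ ciSup_le (h b)

end

theorem traceNorm_projection_add_le_general {U V : Type*}
    [NormedAddCommGroup U] [InnerProductSpace ℝ U]
    [NormedAddCommGroup V] [InnerProductSpace ℝ V]
    [FiniteDimensional ℝ U]
    (n : ℕ) (hU : Module.finrank ℝ U = n) (hV : Module.finrank ℝ V = n)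
    (T : U →ₗ[ℝ] V) (u : U) (w : V) (hu : ‖u‖ = 1) (hw : ‖w‖ = 1) :
    traceNorm (n - 1)
        (((Submodule.orthogonalProjectionOnto ((ℝ ∙ w)ᗮ)).toLinearMap.comp T).comp ((ℝ ∙ u)ᗮ).subtype)
      + |⟪T u, w⟫| ≤ traceNorm n T := by
  have hu0 : u ≠ 0 := norm_ne_zero_iff.mp (by simp [hu])
  have hw0 : w ≠ 0 := norm_ne_zero_iff.mp (by simp [hw])
  obtain ⟨m, rfl⟩ : ∃ m, n = m + 1 :=
    Nat.exists_eq_add_one.mpr (hU ▸ Module.finrank_pos_iff_exists_ne_zero.mpr ⟨u, hu0⟩)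
  have := nonempty_orthonormalBasis_orthogonal_span_singleton hU hu0
  have := nonempty_orthonormalBasis_orthogonal_span_singleton hV hw0
  rw [Nat.add_sub_cancel]
  refine le_sub_iff_add_le.mp (traceNorm_le fun b c ↦ le_sub_iff_add_le.mpr ?_)
  calc _ = ∑ i, |⟪T (b.snoc hu i), c.snoc hw i⟫| := by
        simp [Fin.sum_univ_castSucc]
    _ ≤ traceNorm (m + 1) T := sum_abs_inner_le_traceNorm _ _

/-- Projecting a linear map to the orthogonal complements of unit vectors `u` and `w`
loses at least `|⟪T u, w⟫|` of the trace norm: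
`‖P ∘ T|_{(span u)ᗮ}‖_tr + |⟪T u, w⟫| ≤ ‖T‖_tr`. -/
theorem traceNorm_projection_add_le {U V : Type*}
    [NormedAddCommGroup U] [InnerProductSpace ℝ U]
    [NormedAddCommGroup V] [InnerProductSpace ℝ V]
    [FiniteDimensional ℝ U] [FiniteDimensional ℝ V]
    (n : ℕ) (hn : 2 ≤ n) (hU : Module.finrank ℝ U = n) (hV : Module.finrank ℝ V = n)
    (T : U →ₗ[ℝ] V) (u : U) (w : V) (hu : ‖u‖ = 1) (hw : ‖w‖ = 1) :
    traceNorm (n - 1)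
        (((Submodule.orthogonalProjectionOnto ((ℝ ∙ w)ᗮ)).toLinearMap.comp T).comp ((ℝ ∙ u)ᗮ).subtype)
      + |⟪T u, w⟫| ≤ traceNorm n T :=
  traceNorm_projection_add_le_general n hU hV T u w hu hw
end
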